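/- Let ν be a Lévy measure on ℝ^d with inversion ν'. Then ∫_{|x| ≤ 1} |x| ν'(dx) < ∞ if and only if ∫_{|x| > 1} |x| ν(dx) < ∞. (That is, the inversion has finite small-jump first moment iff the original measure has finite large-jump first moment.) -/

import Mathlib

open MeasureTheory Set
open scoped ENNReal
noncomputable section

/-- `ℝ^d` with the Euclidean norm. -/
abbrev Rd (d : ℕ) := EuclideanSpace ℝ (Fin d)

/-- Geometric inversion `ι(x) = |x|⁻² x` (with the junk value `ι(0) = 0`). -/
def iota {d : ℕ} (x : Rd d) : Rd d := (‖x‖ ^ 2)⁻¹ • x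

/-- A Lévy measure on `ℝ^d`: `ν({0}) = 0` and `∫ (|x|² ∧ 1) ν(dx) < ∞`. -/
def IsLevyMeasure {d : ℕ} (ν : Measure (Rd d)) : Prop :=
  ν {0} = 0 ∧ (∫⁻ x, ENNReal.ofReal (min (‖x‖ ^ 2) 1) ∂ν) < ⊤

/-- The inversion `ν'` of a Lévy measure: `ν'(B) = ∫ 1_B(ι(x)) |x|² ν(dx)`. -/
def invLevy {d : ℕ} (ν : Measure (Rd d)) : Measure (Rd d) :=
  Measure.map iota ((ν.restrict {0}ᶜ).withDensity fun x => ENNReal.ofReal (‖x‖ ^ 2))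

lemma measurable_iota {d : ℕ} : Measurable (iota (d := d)) := by
  unfold iota
  exact ((measurable_norm.pow_const 2).inv).smul measurable_id

lemma norm_iota {d : ℕ} (x : Rd d) (hx : x ≠ 0) : ‖iota x‖ = ‖x‖⁻¹ := by
  have h : ‖x‖ ≠ 0 := norm_ne_zero_iff.mpr hx
  rw [iota, norm_smul]
  rw [Real.norm_eq_abs, abs_of_nonneg (by positivity)]
  field_simp

theorem statement4 {d : ℕ} (ν : Measure (Rd d)) (hν : IsLevyMeasure ν) :
    (∫⁻ x in {x : Rd d | ‖x‖ ≤ 1}, ENNReal.ofReal ‖x‖ ∂(invLevy ν)) < ⊤ ↔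
      (∫⁻ x in {x : Rd d | 1 < ‖x‖}, ENNReal.ofReal ‖x‖ ∂ν) < ⊤ := by
  have hs : MeasurableSet {x : Rd d | ‖x‖ ≤ 1} :=
    measurableSet_le measurable_norm measurable_const
  have hw : Measurable (fun x : Rd d => ENNReal.ofReal (‖x‖ ^ 2)) :=
    (measurable_norm.pow_const 2).ennreal_ofReal
  have hf : Measurable (fun x : Rd d => ENNReal.ofReal ‖x‖) :=
    measurable_norm.ennreal_ofReal
  have ht : MeasurableSet (iota ⁻¹' {x : Rd d | ‖x‖ ≤ 1}) := measurable_iota hs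
  -- key set identity
  have hset : iota ⁻¹' {x : Rd d | ‖x‖ ≤ 1} ∩ {(0 : Rd d)}ᶜ = {x : Rd d | 1 ≤ ‖x‖} := by
    ext x
    simp only [mem_inter_iff, mem_preimage, mem_setOf_eq, mem_compl_iff, mem_singleton_iff]
    constructor
    · rintro ⟨h1, h2⟩
      rw [norm_iota x h2] at h1
      have hpos : 0 < ‖x‖ := norm_pos_iff.mpr h2
      rwa [inv_le_comm₀ hpos one_pos, inv_one] at h1
    · intro h
      have h2 : x ≠ 0 := by
        intro h0; rw [h0, norm_zero] at h; linarith
      refine ⟨?_, h2⟩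
      rw [norm_iota x h2]
      have hpos : 0 < ‖x‖ := norm_pos_iff.mpr h2
      rw [inv_le_comm₀ hpos one_pos, inv_one]
      exact h
  have hLHS : (∫⁻ x in {x : Rd d | ‖x‖ ≤ 1}, ENNReal.ofReal ‖x‖ ∂(invLevy ν))
      = ∫⁻ x in {x : Rd d | 1 ≤ ‖x‖}, ENNReal.ofReal ‖x‖ ∂ν := by
    rw [invLevy, setLIntegral_map hs hf measurable_iota,
      restrict_withDensity ht,
      lintegral_withDensity_eq_lintegral_mul _ hw
        (show Measurable fun x : Rd d => ENNReal.ofReal ‖iota x‖ from hf.comp measurable_iota),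
      Measure.restrict_restrict ht, hset]
    apply setLIntegral_congr_fun (measurableSet_le measurable_const measurable_norm)
    intro x hx
    replace hx : (1:ℝ) ≤ ‖x‖ := hx
    have h2 : x ≠ 0 := by
      intro h0; rw [h0, norm_zero] at hx; linarith
    have h3 : ‖x‖ ≠ 0 := norm_ne_zero_iff.mpr h2
    simp only [Pi.mul_apply, Function.comp_apply]
    rw [norm_iota x h2, ← ENNReal.ofReal_mul (by positivity)]
    congr 1
    field_simp
  rw [hLHS]
  have hsplit : {x : Rd d | 1 ≤ ‖x‖} = {x : Rd d | 1 < ‖x‖} ∪ {x : Rd d | ‖x‖ = 1} := by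
    ext x; simp only [mem_setOf_eq, mem_union]
    constructor
    · intro h; rcases lt_or_eq_of_le h with h | h
      · exact Or.inl h
      · exact Or.inr h.symm
    · rintro (h | h); exacts [le_of_lt h, h.ge]
  have hme : MeasurableSet {x : Rd d | ‖x‖ = 1} :=
    measurable_norm (measurableSet_singleton 1)
  have hdisj : Disjoint {x : Rd d | 1 < ‖x‖} {x : Rd d | ‖x‖ = 1} := by
    rw [Set.disjoint_left]
    intro x hx hx'
    simp only [mem_setOf_eq] at hx hx'
    rw [hx'] at hx; exact lt_irrefl _ hx
  rw [hsplit, lintegral_union hme hdisj]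
  have hC : (∫⁻ x in {x : Rd d | ‖x‖ = 1}, ENNReal.ofReal ‖x‖ ∂ν) < ⊤ := by
    calc (∫⁻ x in {x : Rd d | ‖x‖ = 1}, ENNReal.ofReal ‖x‖ ∂ν)
        ≤ ∫⁻ x in {x : Rd d | ‖x‖ = 1}, ENNReal.ofReal (min (‖x‖ ^ 2) 1) ∂ν := by
          apply setLIntegral_mono_ae (((measurable_norm.pow_const 2).min measurable_const).ennreal_ofReal).aemeasurable
          filter_upwards with x hx
          replace hx : ‖x‖ = 1 := hx
          rw [hx]; norm_num
      _ ≤ ∫⁻ x, ENNReal.ofReal (min (‖x‖ ^ 2) 1) ∂ν := setLIntegral_le_lintegral _ _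
      _ < ⊤ := hν.2
  constructor
  · intro h
    exact lt_of_le_of_lt (le_add_right le_rfl) h
  · intro h
    exact ENNReal.add_lt_top.mpr ⟨h, hC⟩
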